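/- For a minimum-length covering strategy S = (W_1,...,W_k) of a tree T, the length of S equals the sum over i of the lengths of the paths P(W_i) plus twice the number of vertices of T not lying on any of the paths P(W_i). -/

import Mathlib

open Finset

variable {V : Type*}

/-- The list of consecutive steps of a walk given as a list of vertices. -/
def wsteps (W : List V) : List (V × V) := W.zip W.tail

/-- A walk on a graph: a nonempty list of vertices in which consecutive
entries are equal or adjacent. -/
def IsWalk (G : SimpleGraph V) (W : List V) : Prop :=
  W ≠ [] ∧ ∀ p ∈ wsteps W, p.1 = p.2 ∨ G.Adj p.1 p.2

/-- The length of a walk: the number of position-changing moves. -/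
def wlen [DecidableEq V] (W : List V) : ℕ :=
  (wsteps W).countP (fun p => decide (p.1 ≠ p.2))

/-- The number of times a walk traverses the edge `{x, y}` (in either direction). -/
def trav [DecidableEq V] (W : List V) (x y : V) : ℕ :=
  (wsteps W).countP (fun p => decide ((p.1 = x ∧ p.2 = y) ∨ (p.1 = y ∧ p.2 = x)))

/-- The number of times a walk traverses the edge `(x, y)` from `x` to `y`. -/
def dirTrav [DecidableEq V] (W : List V) (x y : V) : ℕ :=
  (wsteps W).countP (fun p => decide (p.1 = x ∧ p.2 = y))

/-- A tuple of walks covers the graph: every vertex appears in some walk. -/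
def Covers {k : ℕ} (S : Fin k → List V) : Prop := ∀ v : V, ∃ i, v ∈ S i

/-- The total length of a strategy: the sum of the lengths of the walks. -/
def slen [DecidableEq V] {k : ℕ} (S : Fin k → List V) : ℕ := ∑ i, wlen (S i)

/-- A minimum-length covering strategy: a tuple of walks covering all vertices whose
total length is no larger than that of any covering strategy with the same starts. -/
def IsMinCover [DecidableEq V] (G : SimpleGraph V) {k : ℕ} (S : Fin k → List V) : Prop :=
  (∀ i, IsWalk G (S i)) ∧ Covers S ∧
    ∀ S' : Fin k → List V, (∀ i, IsWalk G (S' i)) → Covers S' →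
      (∀ i, (S' i).head? = (S i).head?) → slen S ≤ slen S'

/-!
Split the length of each walk over the edges of the tree. The edges that `S i` traverses exactly
once are exactly those of the path `P i`, so `wlen (S i) = wlen (P i) + repeatedLen G (S i)`,
where `repeatedLen` adds up the traversals of all other edges. It remains to show
`∑ i, repeatedLen G (S i) = 2 * #U` for the set `U` of vertices on no path.

Upper bound: starting from the paths, a vertex of `U` adjacent to a covered vertex `w` is covered
by the detour `w → u → w` of cost 2, so minimality of `S` gives `≤`.

Lower bound: let `v ∈ U` be visited by `S i`, with start `r`. The first edge `vy` of the tree path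
from `v` to `r` is a bridge separating `v` from `r`, so `S i` crosses it, and not exactly once
because `v ∉ P i`; hence at least twice. Distinct vertices give distinct edges: if `v ↦ vy` and
`y ↦ yv`, then `v` and `y` would both reach `r` without the bridge `vy`.
-/

open SimpleGraph

section ListWalks

lemma wsteps_cons_cons (a b : V) (l : List V) :
    wsteps (a :: b :: l) = (a, b) :: wsteps (b :: l) := rfl

lemma mem_of_mem_wsteps {W : List V} {p : V × V} (hp : p ∈ wsteps W) : p.1 ∈ W ∧ p.2 ∈ W :=
  (List.of_mem_zip hp).imp id List.mem_of_mem_tail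

lemma forall_mem_wsteps_iff_isChain {R : V → V → Prop} {W : List V} :
    (∀ p ∈ wsteps W, R p.1 p.2) ↔ W.IsChain R := by
  induction W using List.twoStepInduction with
  | nil | singleton => simp [wsteps]
  | cons_cons a b l _ ih =>
    simp only [wsteps_cons_cons, List.forall_mem_cons, List.isChain_cons_cons, ih b]

lemma wsteps_append_cons (A : List V) (w : V) (B : List V) :
    wsteps (A ++ w :: B) = wsteps (A ++ [w]) ++ wsteps (w :: B) := by
  induction A using List.twoStepInduction with
  | nil => rfl
  | singleton a => rfl
  | cons_cons a a' A _ ih =>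
    simp only [List.cons_append, wsteps_cons_cons] at ih ⊢
    rw [ih a']

lemma isWalk_iff {G : SimpleGraph V} {W : List V} :
    IsWalk G W ↔ W ≠ [] ∧ W.IsChain (fun a b => a = b ∨ G.Adj a b) :=
  and_congr_right' (forall_mem_wsteps_iff_isChain (R := fun a b => a = b ∨ G.Adj a b))

lemma IsWalk.reachable {G : SimpleGraph V} {W : List V} (hW : IsWalk G W) {a b : V}
    (ha : a ∈ W) (hb : b ∈ W) : G.Reachable a b := by
  have hhead := (isWalk_iff.1 hW).2.induction (G.Reachable (W.head hW.1)) W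
    (fun x y hxy hx => hxy.elim (· ▸ hx) fun hadj => hx.trans hadj.reachable)
    (fun _ => Reachable.refl _)
  exact (hhead a ha).symm.trans (hhead b hb)

lemma IsWalk.detour {G : SimpleGraph V} {A B : List V} {w u : V} (hW : IsWalk G (A ++ w :: B))
    (hadj : G.Adj w u) : IsWalk G (A ++ w :: u :: w :: B) := by
  rw [isWalk_iff, List.isChain_split] at hW ⊢
  simp_all [List.isChain_cons_cons, hadj.symm]

lemma head?_detour (A B : List V) (w u : V) :
    (A ++ w :: u :: w :: B).head? = (A ++ w :: B).head? := by
  cases A <;> rfl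

variable [DecidableEq V]

lemma wlen_detour (A B : List V) {w u : V} (hne : w ≠ u) :
    wlen (A ++ w :: u :: w :: B) = wlen (A ++ w :: B) + 2 := by
  rw [wlen, wlen, wsteps_append_cons A w, wsteps_append_cons A w B]
  simp only [List.countP_append, wsteps_cons_cons, List.countP_cons]
  simp only [ne_eq, decide_not, hne, hne.symm, not_false_eq_true, decide_true, ↓reduceIte]
  omega

end ListWalks

lemma Finset.sum_countP_eq_countP_mem {α β : Type*} [DecidableEq β] (f : α → β) (s : Finset β)
    (l : List α) : ∑ b ∈ s, l.countP (fun a => f a = b) = l.countP (fun a => f a ∈ s) := by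
  induction l with
  | nil => simp
  | cons a l ih => simp [List.countP_cons, Finset.sum_add_distrib, ih]

section EdgeTraversals

variable [DecidableEq V]

def edgeTrav (W : List V) (e : Sym2 V) : ℕ :=
  (wsteps W).countP (fun p => s(p.1, p.2) = e)

lemma trav_eq_edgeTrav (W : List V) (x y : V) : trav W x y = edgeTrav W s(x, y) := by
  simp only [trav, edgeTrav, Sym2.eq_iff]

lemma edgeTrav_eq_zero_of_notMem {W : List V} {x : V} (hx : x ∉ W) (y : V) :
    edgeTrav W s(x, y) = 0 := by
  refine List.countP_eq_zero.2 fun p hp he => hx ?_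
  have hxp : x ∈ s(p.1, p.2) := (of_decide_eq_true he) ▸ Sym2.mem_mk_left x y
  rcases Sym2.mem_iff.1 hxp with rfl | rfl
  exacts [(mem_of_mem_wsteps hp).1, (mem_of_mem_wsteps hp).2]

lemma edgeTrav_cons_cons (a b : V) (l : List V) (e : Sym2 V) :
    edgeTrav (a :: b :: l) e = edgeTrav (b :: l) e + if s(a, b) = e then 1 else 0 := by
  simp only [edgeTrav, wsteps_cons_cons, List.countP_cons, decide_eq_true_eq]

lemma edgeTrav_le_one_of_nodup {W : List V} (hW : W.Nodup) (e : Sym2 V) : edgeTrav W e ≤ 1 := by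
  induction W using List.twoStepInduction with
  | nil | singleton => simp [edgeTrav, wsteps]
  | cons_cons a b l _ ih =>
    rw [edgeTrav_cons_cons]
    split_ifs with he
    · have ha : a ∉ b :: l := (List.nodup_cons.1 hW).1
      rw [← he, edgeTrav_eq_zero_of_notMem ha]
    · simpa using ih b hW.of_cons

lemma IsWalk.deleteEdges {G : SimpleGraph V} {W : List V} (hW : IsWalk G W) {e : Sym2 V}
    (he : edgeTrav W e = 0) : IsWalk (G.deleteEdges {e}) W := by
  refine ⟨hW.1, fun p hp => (hW.2 p hp).imp id fun hadj => ?_⟩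
  rw [deleteEdges_adj]
  exact ⟨hadj, by simpa using List.countP_eq_zero.1 he p hp⟩

variable [Fintype V] (G : SimpleGraph V) [DecidableRel G.Adj]

lemma IsWalk.wlen_eq_sum_edgeTrav {W : List V} (hW : IsWalk G W) :
    wlen W = ∑ e ∈ G.edgeFinset, edgeTrav W e := by
  unfold edgeTrav
  rw [Finset.sum_countP_eq_countP_mem (fun p : V × V => s(p.1, p.2)), wlen]
  refine List.countP_congr fun p hp => ?_
  rcases hW.2 p hp with h | h
  · simp [h]
  · simp [h, h.ne]

def repeatedLen (W : List V) : ℕ := ∑ e ∈ G.edgeFinset with edgeTrav W e ≠ 1, edgeTrav W e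

lemma IsWalk.wlen_eq_card_add_repeatedLen {W : List V} (hW : IsWalk G W) :
    wlen W = #{e ∈ G.edgeFinset | edgeTrav W e = 1} + repeatedLen G W := by
  rw [hW.wlen_eq_sum_edgeTrav, repeatedLen, ← Finset.sum_filter_add_sum_filter_not _
    (fun e => edgeTrav W e = 1), Finset.card_eq_sum_ones]
  exact congrArg (· + _) (Finset.sum_congr rfl fun e he => (Finset.mem_filter.1 he).2)

lemma repeatedLen_eq_zero_of_nodup {W : List V} (hW : W.Nodup) : repeatedLen G W = 0 :=
  Finset.sum_eq_zero fun e he => by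
    have := edgeTrav_le_one_of_nodup hW e
    have := (Finset.mem_filter.1 he).2
    omega

lemma IsWalk.wlen_eq_wlen_add_repeatedLen {W P : List V} (hW : IsWalk G W) (hP : IsWalk G P)
    (hPnd : P.Nodup) (htrav : ∀ x y, G.Adj x y → (trav W x y = 1 ↔ trav P x y = 1)) :
    wlen W = wlen P + repeatedLen G W := by
  have honce : {e ∈ G.edgeFinset | edgeTrav W e = 1} = {e ∈ G.edgeFinset | edgeTrav P e = 1} :=
    Finset.filter_congr fun e he => by
      induction e using Sym2.ind with
      | _ x y => simpa only [trav_eq_edgeTrav] using htrav x y (mem_edgeFinset.1 he)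
  rw [hW.wlen_eq_card_add_repeatedLen, hP.wlen_eq_card_add_repeatedLen,
    repeatedLen_eq_zero_of_nodup G hPnd, honce, add_zero]

end EdgeTraversals

lemma SimpleGraph.Preconnected.exists_adj_reachable_deleteEdges {G : SimpleGraph V}
    (hG : G.Preconnected) {v r : V} (hvr : v ≠ r) :
    ∃ y, G.Adj v y ∧ (G.deleteEdges {s(v, y)}).Reachable y r := by
  classical
  obtain ⟨p, hp⟩ := (hG v r).some.toPath
  obtain ⟨y, hadj, q, rfl⟩ := Walk.exists_eq_cons_of_ne hvr p
  refine ⟨y, hadj, reachable_deleteEdges_iff_exists_walk.2 ⟨q, fun he => ?_⟩⟩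
  exact (Walk.cons_isPath_iff hadj q).1 hp |>.2 (q.fst_mem_support_of_mem_edges he)

section LowerBound

variable [DecidableEq V] [Fintype V] {G : SimpleGraph V} [DecidableRel G.Adj]

lemma IsWalk.two_mul_card_le_repeatedLen (hG : G.IsTree) {W : List V} (hW : IsWalk G W)
    {r : V} (hr : r ∈ W) (D : Finset V)
    (hD : ∀ v ∈ D, v ∈ W ∧ v ≠ r ∧ ∀ y, G.Adj v y → edgeTrav W s(v, y) ≠ 1) :
    2 * #D ≤ repeatedLen G W := by
  choose! y hadj hreach using fun v (hv : v ∈ D) =>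
    hG.connected.preconnected.exists_adj_reachable_deleteEdges (hD v hv).2.1
  have hbridge : ∀ v ∈ D, ¬(G.deleteEdges {s(v, y v)}).Reachable v (y v) := fun v hv =>
    isAcyclic_iff_forall_adj_isBridge.1 hG.isAcyclic (hadj v hv)
  have htwo : ∀ v ∈ D, 2 ≤ edgeTrav W s(v, y v) := fun v hv => by
    have hcross : edgeTrav W s(v, y v) ≠ 0 := fun h0 => hbridge v hv <|
      ((hW.deleteEdges h0).reachable (hD v hv).1 hr).trans (hreach v hv).symm
    have := (hD v hv).2.2 _ (hadj v hv)
    omega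
  have hinj : Set.InjOn (fun v => s(v, y v)) D := by
    intro v hv w hw hvw
    by_contra hne
    obtain ⟨hv', hw'⟩ : v = y w ∧ y v = w := by simpa [Sym2.eq_iff, hne] using hvw
    have hvr := hreach w hw
    have hwr := hreach v hv
    have hvw := hbridge v hv
    rw [← hv', Sym2.eq_swap] at hvr
    rw [hw'] at hwr hvw
    exact hvw (hvr.trans hwr.symm)
  calc 2 * #D = ∑ _v ∈ D, 2 := by rw [Finset.sum_const, smul_eq_mul, mul_comm]
    _ ≤ ∑ v ∈ D, edgeTrav W s(v, y v) := Finset.sum_le_sum htwo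
    _ = ∑ e ∈ D.image (fun v => s(v, y v)), edgeTrav W e := (Finset.sum_image hinj).symm
    _ ≤ repeatedLen G W := by
      refine Finset.sum_le_sum_of_subset fun e he => ?_
      obtain ⟨v, hv, rfl⟩ := Finset.mem_image.1 he
      exact Finset.mem_filter.2 ⟨mem_edgeFinset.2 (hadj v hv), (hD v hv).2.2 _ (hadj v hv)⟩

end LowerBound

section Covering

variable [Fintype V] [DecidableEq V] {G : SimpleGraph V} {k : ℕ}

def uncovered (Q : Fin k → List V) : Finset V := Finset.univ.filter (fun v : V => ∀ i, v ∉ Q i)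

lemma covers_iff_uncovered_eq_empty {Q : Fin k → List V} : Covers Q ↔ uncovered Q = ∅ := by
  simp [Covers, uncovered, Finset.filter_eq_empty_iff]

lemma exists_detour (hG : G.Preconnected) {Q : Fin k → List V} (hQ : ∀ i, IsWalk G (Q i))
    (i₀ : Fin k) {x : V} (hx : x ∈ uncovered Q) :
    ∃ Q' : Fin k → List V, (∀ i, IsWalk G (Q' i)) ∧ (∀ i, (Q' i).head? = (Q i).head?) ∧
      slen Q' = slen Q + 2 ∧ uncovered Q' ⊂ uncovered Q := by
  obtain ⟨d, -, ⟨i, hwi⟩, hu⟩ := (hG ((Q i₀).head (hQ i₀).1) x).some.exists_boundary_dart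
    {z | ∃ i, z ∈ Q i} ⟨i₀, List.head_mem _⟩ (by simpa [uncovered] using hx)
  obtain ⟨A, B, hAB⟩ := List.append_of_mem hwi
  set Q' := Function.update Q i (A ++ d.fst :: d.snd :: d.fst :: B)
  have hsub : ∀ j, ∀ z ∈ Q j, z ∈ Q' j := by
    refine (Function.forall_update_iff Q fun j l => ∀ z ∈ Q j, z ∈ l).2 ⟨?_, fun j _ => fun _ => id⟩
    simp only [hAB, List.mem_append, List.mem_cons]
    tauto
  refine ⟨Q', ?_, ?_, ?_, ?_⟩
  · refine (Function.forall_update_iff Q fun _ l => IsWalk G l).2 ⟨?_, fun j _ => hQ j⟩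
    exact (hAB ▸ hQ i).detour d.adj
  · refine (Function.forall_update_iff Q fun j l => l.head? = (Q j).head?).2 ⟨?_, fun j _ => rfl⟩
    rw [hAB, head?_detour]
  · have hlen : wlen (Q' i) = wlen (Q i) + 2 := by
      rw [show Q' i = _ from Function.update_self .., hAB, wlen_detour A B d.adj.ne]
    have hrest : ∀ j ∈ Finset.univ.erase i, wlen (Q' j) = wlen (Q j) := fun j hj =>
      congrArg wlen (Function.update_of_ne (Finset.ne_of_mem_erase hj) _ _)
    rw [slen, slen, ← Finset.add_sum_erase _ _ (Finset.mem_univ i),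
      ← Finset.add_sum_erase _ _ (Finset.mem_univ i), hlen, Finset.sum_congr rfl hrest]
    ring
  · refine (Finset.ssubset_iff_of_subset fun v hv => ?_).2 ⟨d.snd, ?_, ?_⟩
    · simp only [uncovered, Finset.mem_filter, Finset.mem_univ, true_and] at hv ⊢
      exact fun j hvj => hv j (hsub j v hvj)
    · simpa [uncovered] using hu
    · exact fun h => (Finset.mem_filter.1 h).2 i (by simp [Q'])

lemma exists_covers_slen_le [Nonempty (Fin k)] (hG : G.Preconnected) (Q : Fin k → List V)
    (hQ : ∀ i, IsWalk G (Q i)) :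
    ∃ Q' : Fin k → List V, (∀ i, IsWalk G (Q' i)) ∧ Covers Q' ∧
      (∀ i, (Q' i).head? = (Q i).head?) ∧ slen Q' ≤ slen Q + 2 * #(uncovered Q) := by
  induction hn : #(uncovered Q) using Nat.strong_induction_on generalizing Q with
  | _ n ih =>
  obtain hU | ⟨x, hx⟩ := (uncovered Q).eq_empty_or_nonempty
  · exact ⟨Q, hQ, covers_iff_uncovered_eq_empty.2 hU, fun _ => rfl, by omega⟩
  obtain ⟨Q', hQ', hhead', hlen', hsub'⟩ := exists_detour hG hQ (Classical.arbitrary _) hx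
  have hlt := Finset.card_lt_card hsub'
  obtain ⟨Q'', hQ'', hcov, hhead'', hlen''⟩ := ih _ (hn ▸ hlt) Q' hQ' rfl
  exact ⟨Q'', hQ'', hcov, fun i => (hhead'' i).trans (hhead' i), by omega⟩

lemma IsMinCover.slen_le (hG : G.Preconnected) {S Q : Fin k → List V} (hS : IsMinCover G S)
    (hQ : ∀ i, IsWalk G (Q i)) (hhead : ∀ i, (Q i).head? = (S i).head?) :
    slen S ≤ slen Q + 2 * #(uncovered Q) := by
  rcases isEmpty_or_nonempty (Fin k) with hk | hk
  · simp [slen]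
  obtain ⟨Q', hQ', hcov, hhead', hlen⟩ := exists_covers_slen_le hG Q hQ
  exact (hS.2.2 Q' hQ' hcov fun i => (hhead' i).trans (hhead i)).trans hlen

lemma two_mul_card_uncovered_le_sum_repeatedLen [DecidableRel G.Adj] (hG : G.IsTree)
    {S P : Fin k → List V} (hS : ∀ i, IsWalk G (S i)) (hcov : Covers S)
    (hhead : ∀ i, (P i).head? = (S i).head?)
    (htrav : ∀ i x y, G.Adj x y → trav (S i) x y = 1 → trav (P i) x y = 1) :
    2 * #(uncovered P) ≤ ∑ i, repeatedLen G (S i) := by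
  choose c hc using hcov
  rw [Finset.card_eq_sum_card_fiberwise (f := c) (t := Finset.univ) fun _ _ => Finset.mem_univ _,
    Finset.mul_sum]
  refine Finset.sum_le_sum fun i _ => (hS i).two_mul_card_le_repeatedLen hG
    (List.head_mem (hS i).1) _ fun v hv => ?_
  obtain ⟨hvU, rfl⟩ := Finset.mem_filter.1 hv
  have hvP : ∀ j, v ∉ P j := (Finset.mem_filter.1 hvU).2
  have hrP : (S (c v)).head (hS (c v)).1 ∈ P (c v) :=
    List.mem_of_mem_head? ((hhead _).trans (List.head?_eq_some_head _))
  refine ⟨hc v, fun h => hvP _ (h.symm ▸ hrP), fun y hadj h1 => ?_⟩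
  have h1P := htrav _ v y hadj (by rwa [trav_eq_edgeTrav])
  rw [trav_eq_edgeTrav, edgeTrav_eq_zero_of_notMem (hvP _)] at h1P
  exact zero_ne_one h1P

end Covering

/-- Cost formula: the length of a minimum-length covering strategy equals the sum
of the lengths of the paths P(Wᵢ) plus twice the number of vertices not on any path. -/
theorem stmt6 {V : Type*} [Fintype V] [DecidableEq V] (G : SimpleGraph V) (hT : G.IsTree)
    {k : ℕ} (S P : Fin k → List V) (hS : IsMinCover G S)
    (hP : ∀ i, (P i).Nodup ∧ (P i).Chain' G.Adj ∧ (P i).head? = (S i).head? ∧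
      (∀ x ∈ P i, x ∈ S i) ∧
      ∀ x y : V, G.Adj x y → (trav (S i) x y = 1 ↔ trav (P i) x y = 1)) :
    slen S = (∑ i, wlen (P i)) +
      2 * (Finset.univ.filter (fun v : V => ∀ i, v ∉ P i)).card := by
  classical
  have hPwalk : ∀ i, IsWalk G (P i) := fun i => by
    refine isWalk_iff.2 ⟨fun h => (hS.1 i).1 ?_, List.IsChain.imp (fun _ _ => Or.inr) (hP i).2.1⟩
    rw [← List.head?_eq_none_iff, ← (hP i).2.2.1, h, List.head?_nil]
  have hsplit : ∀ i, wlen (S i) = wlen (P i) + repeatedLen G (S i) := fun i =>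
    (hS.1 i).wlen_eq_wlen_add_repeatedLen G (hPwalk i) (hP i).1 (hP i).2.2.2.2
  have hupper := hS.slen_le hT.connected.preconnected hPwalk fun i => (hP i).2.2.1
  have hlower := two_mul_card_uncovered_le_sum_repeatedLen hT hS.1 hS.2.1
    (fun i => (hP i).2.2.1) fun i x y hxy => ((hP i).2.2.2.2 x y hxy).1
  simp only [slen, hsplit, Finset.sum_add_distrib] at hupper ⊢
  change _ = _ + 2 * #(uncovered P)
  omega
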